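/- Let E, d, N_E, N_C be natural numbers with 1 ≤ d, 1 ≤ N_C, and N_E ≤ E − d + 1. Then, over the real numbers, (1 − ∏_{l=0}^{d−1} (1 − N_E/(E−l)))^{N_C} ≤ exp(−N_C · (1 − N_E/(E−d+1))^{d}). -/

import Mathlib

open Finset Real

/-
Each factor `1 - N_E / (E - l)` lies between `q = 1 - N_E / (E - d + 1)` and `1`, so the product
is at least `q ^ d`. Hence the base is at most `1 - q ^ d ≤ exp (-q ^ d)`, and raising to the
power `N_C` gives the bound.
-/

lemma one_sub_pow_le_exp_neg_mul {x : ℝ} (hx : x ≤ 1) (n : ℕ) :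
    (1 - x) ^ n ≤ exp (-n * x) :=
  calc (1 - x) ^ n ≤ exp (-x) ^ n := pow_le_pow_left₀ (by linarith) (one_sub_le_exp_neg x) n
    _ = exp (-n * x) := by rw [← exp_nat_mul]; ring_nf

lemma one_sub_prod_pow_le_exp {ι : Type*} (s : Finset ι) (f : ι → ℝ) {q : ℝ} (hq : 0 ≤ q)
    (hf : ∀ i ∈ s, q ≤ f i ∧ f i ≤ 1) (n : ℕ) :
    (1 - ∏ i ∈ s, f i) ^ n ≤ exp (-n * q ^ #s) := by
  have hlow : q ^ #s ≤ ∏ i ∈ s, f i := by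
    simpa using prod_le_prod (fun _ _ => hq) fun i hi => (hf i hi).1
  have hup : ∏ i ∈ s, f i ≤ 1 :=
    prod_le_one (fun i hi => hq.trans (hf i hi).1) fun i hi => (hf i hi).2
  calc (1 - ∏ i ∈ s, f i) ^ n ≤ (1 - q ^ #s) ^ n := pow_le_pow_left₀ (by linarith) (by linarith) n
    _ ≤ exp (-n * q ^ #s) := one_sub_pow_le_exp_neg_mul (hlow.trans hup) n

lemma one_sub_div_le_one_sub_div {a b c : ℝ} (ha : 0 ≤ a) (hab : a ≤ b) (hbc : b ≤ c) :
    1 - a / b ≤ 1 - a / c := by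
  rcases ha.eq_or_lt with rfl | ha
  · simp
  · exact sub_le_sub_left (div_le_div_of_nonneg_left ha.le (ha.trans_le hab) hbc) 1

theorem eavesdrop_breach_upper_bound_general
    (E d NE NC : ℕ)
    (hNE : (NE : ℝ) ≤ (E : ℝ) - (d : ℝ) + 1) :
    (1 - ∏ l ∈ Finset.range d, (1 - (NE : ℝ) / ((E : ℝ) - (l : ℝ)))) ^ NC
      ≤ Real.exp (-(NC : ℝ) * (1 - (NE : ℝ) / ((E : ℝ) - (d : ℝ) + 1)) ^ d) := by
  have hNE0 : (0 : ℝ) ≤ NE := NE.cast_nonneg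
  have hq : 0 ≤ 1 - (NE : ℝ) / ((E : ℝ) - (d : ℝ) + 1) :=
    sub_nonneg.2 (div_le_one_of_le₀ hNE (hNE0.trans hNE))
  have hfactor : ∀ l ∈ range d,
      1 - (NE : ℝ) / ((E : ℝ) - (d : ℝ) + 1) ≤ 1 - (NE : ℝ) / ((E : ℝ) - (l : ℝ)) ∧
        1 - (NE : ℝ) / ((E : ℝ) - (l : ℝ)) ≤ 1 := by
    intro l hl
    have hld : (l : ℝ) + 1 ≤ d := by exact_mod_cast mem_range.1 hl
    have hden : (E : ℝ) - d + 1 ≤ E - l := by linarith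
    exact ⟨one_sub_div_le_one_sub_div hNE0 hNE hden,
      sub_le_self _ (div_nonneg hNE0 (by linarith))⟩
  simpa using one_sub_prod_pow_le_exp (range d) _ hq hfactor NC

/-- Upper bound of Theorem 3 of the paper: for `1 ≤ d`, `1 ≤ N_C`, `N_E ≤ E - d + 1`,
the eavesdropping breach probability satisfies
`(1 - ∏_{l=0}^{d-1} (1 - N_E/(E-l)))^{N_C} ≤ exp(-N_C (1 - N_E/(E-d+1))^{d})`. -/
theorem eavesdrop_breach_upper_bound
    (E d NE NC : ℕ) (hd : 1 ≤ d) (hNC : 1 ≤ NC)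
    (hNE : (NE : ℝ) ≤ (E : ℝ) - (d : ℝ) + 1) :
    (1 - ∏ l ∈ Finset.range d, (1 - (NE : ℝ) / ((E : ℝ) - (l : ℝ)))) ^ NC
      ≤ Real.exp (-(NC : ℝ) * (1 - (NE : ℝ) / ((E : ℝ) - (d : ℝ) + 1)) ^ d) :=
  eavesdrop_breach_upper_bound_general E d NE NC hNE
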